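/- arXiv:2310.00116 — 2 statements merged into one kernel-verified Lean document; each statement's English description precedes it below -/
import Mathlib

section
/- Suppose G ∈ ℝ^{p×m}, and T ∈ ℝ^{m×m} is diagonal positive semidefinite with GᵀG ⪯ T. Let φ be slope-restricted in [α, β] entrywise (α ≤ β, possibly α < 0). Then h(x) = Hx + GΦ(Wx) is Lipschitz in ℓ₂ norm with constant ‖H + ((α+β)/2)GW‖₂ + ((β−α)/2)·‖Wᵀ T W‖₂^{1/2}. -/
/-!
Write `c = (α+β)/2` and `L = (β−α)/2`. Then `h x − h x' = (H + c•GW)(x − x') + G d`, where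
`d i = ψ((Wx)ᵢ) − ψ((Wx')ᵢ)` for the centred nonlinearity `ψ = φ − c·id`, which is `L`-Lipschitz.
The first term is bounded by the spectral norm. For the second, `GᵀG ⪯ T` gives
`‖G d‖² ≤ dᵀ T d`, and since `T` is diagonal with nonnegative entries the coordinatewise bound
`|dᵢ| ≤ L |(W(x − x'))ᵢ|` yields `dᵀ T d ≤ L² (x − x')ᵀ WᵀTW (x − x') ≤ L² ‖WᵀTW‖ ‖x − x'‖²`.
-/

open Matrix

/-- Spectral norm (ℓ₂ operator norm) of a matrix. -/
noncomputable def specNorm {p n : ℕ} (M : Matrix (Fin p) (Fin n) ℝ) : ℝ :=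
  ‖LinearMap.toContinuousLinearMap (Matrix.toEuclideanLin M)‖

/-- View a plain vector as an element of Euclidean space. -/
def eu {n : ℕ} (v : Fin n → ℝ) : EuclideanSpace ℝ (Fin n) := WithLp.toLp 2 v

lemma abs_sub_sub_mul_sub_le_of_slope_mem {φ : ℝ → ℝ} {α β : ℝ}
    (hslope : ∀ a b : ℝ, a ≠ b → α ≤ (φ a - φ b) / (a - b) ∧ (φ a - φ b) / (a - b) ≤ β)
    (a b : ℝ) :
    |φ a - φ b - (α + β) / 2 * (a - b)| ≤ (β - α) / 2 * |a - b| := by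
  rcases eq_or_ne a b with rfl | hab
  · simp
  have hne : a - b ≠ 0 := sub_ne_zero.mpr hab
  obtain ⟨hlo, hhi⟩ := hslope a b hab
  have hslope_dev : |(φ a - φ b) / (a - b) - (α + β) / 2| ≤ (β - α) / 2 := by
    rw [abs_le]; constructor <;> linarith
  calc |φ a - φ b - (α + β) / 2 * (a - b)|
      = |(φ a - φ b) / (a - b) - (α + β) / 2| * |a - b| := by
        rw [← abs_mul, sub_mul, div_mul_cancel₀ _ hne]
    _ ≤ (β - α) / 2 * |a - b| := by gcongr

section QuadraticForms

variable {ι κ : Type*} [Fintype ι] [Fintype κ]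

lemma dotProduct_mulVec_le_of_isDiag_of_abs_le {T : Matrix ι ι ℝ} (hT : T.IsDiag)
    (hT0 : ∀ i, 0 ≤ T i i) {d w : ι → ℝ} {L : ℝ} (hdw : ∀ i, |d i| ≤ L * |w i|) :
    d ⬝ᵥ T *ᵥ d ≤ L ^ 2 * (w ⬝ᵥ T *ᵥ w) := by
  classical
  rw [← hT.diagonal_diag]
  simp only [dotProduct, mulVec_diagonal, diag_apply, Finset.mul_sum]
  refine Finset.sum_le_sum fun i _ => ?_
  have hsq : d i ^ 2 ≤ L ^ 2 * w i ^ 2 := by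
    rw [← sq_abs (d i), ← sq_abs (w i), ← mul_pow]
    exact pow_le_pow_left₀ (abs_nonneg _) (hdw i) 2
  nlinarith [hT0 i]

lemma mulVec_dotProduct_mulVec_le_of_posSemidef_sub {G : Matrix κ ι ℝ} {T : Matrix ι ι ℝ}
    (hGT : (T - Gᵀ * G).PosSemidef) (d : ι → ℝ) :
    G *ᵥ d ⬝ᵥ G *ᵥ d ≤ d ⬝ᵥ T *ᵥ d := by
  have h := hGT.dotProduct_mulVec_nonneg d
  rw [star_trivial, sub_mulVec, dotProduct_sub, ← mulVec_mulVec, dotProduct_mulVec d Gᵀ,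
    vecMul_transpose] at h
  linarith

lemma mulVec_dotProduct_mulVec_mulVec (W : Matrix ι κ ℝ) (T : Matrix ι ι ℝ) (z : κ → ℝ) :
    W *ᵥ z ⬝ᵥ T *ᵥ (W *ᵥ z) = z ⬝ᵥ (Wᵀ * T * W) *ᵥ z := by
  rw [← mulVec_mulVec, ← mulVec_mulVec, dotProduct_mulVec z, vecMul_transpose]

lemma sub_eq_mulVec_add_mulVec_centred {μ : Type*} (φ : ℝ → ℝ) (c : ℝ) (H : Matrix μ ι ℝ)
    (G : Matrix μ κ ℝ) (W : Matrix κ ι ℝ) (u v : ι → ℝ) :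
    (H *ᵥ u + G *ᵥ fun i => φ ((W *ᵥ u) i)) - (H *ᵥ v + G *ᵥ fun i => φ ((W *ᵥ v) i)) =
      (H + c • (G * W)) *ᵥ (u - v) +
        G *ᵥ fun i => φ ((W *ᵥ u) i) - φ ((W *ᵥ v) i) - c * (W *ᵥ (u - v)) i := by
  have hcentred : (fun i => φ ((W *ᵥ u) i) - φ ((W *ᵥ v) i) - c * (W *ᵥ (u - v)) i) =
      (fun i => φ ((W *ᵥ u) i)) - (fun i => φ ((W *ᵥ v) i)) - c • W *ᵥ (u - v) := rfl
  rw [hcentred]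
  simp only [mulVec_sub, add_mulVec, mulVec_smul, smul_mulVec, ← mulVec_mulVec, smul_sub]
  abel

end QuadraticForms

section SpectralNorm

variable {n p : ℕ}

lemma norm_eu_mulVec_le (M : Matrix (Fin p) (Fin n) ℝ) (v : Fin n → ℝ) :
    ‖eu (M *ᵥ v)‖ ≤ specNorm M * ‖eu v‖ :=
  (LinearMap.toContinuousLinearMap (Matrix.toEuclideanLin M)).le_opNorm (eu v)

lemma dotProduct_mulVec_le_specNorm_mul_sq (M : Matrix (Fin n) (Fin n) ℝ) (v : Fin n → ℝ) :
    v ⬝ᵥ M *ᵥ v ≤ specNorm M * ‖eu v‖ ^ 2 := by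
  have hinner : v ⬝ᵥ M *ᵥ v = inner ℝ (eu v) (eu (M *ᵥ v)) := by
    rw [EuclideanSpace.inner_eq_star_dotProduct, star_trivial, dotProduct_comm]; rfl
  calc v ⬝ᵥ M *ᵥ v ≤ ‖eu v‖ * ‖eu (M *ᵥ v)‖ := hinner ▸ real_inner_le_norm _ _
    _ ≤ ‖eu v‖ * (specNorm M * ‖eu v‖) := by gcongr; exact norm_eu_mulVec_le M v
    _ = specNorm M * ‖eu v‖ ^ 2 := by ring

lemma norm_eu_sq (v : Fin n → ℝ) : ‖eu v‖ ^ 2 = v ⬝ᵥ v := by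
  rw [← real_inner_self_eq_norm_sq, EuclideanSpace.inner_eq_star_dotProduct, star_trivial]; rfl

lemma norm_eu_mulVec_le_of_abs_le {m : ℕ} {G : Matrix (Fin p) (Fin m) ℝ}
    {W : Matrix (Fin m) (Fin n) ℝ} {T : Matrix (Fin m) (Fin m) ℝ} (hTdiag : T.IsDiag)
    (hTpsd : T.PosSemidef) (hGT : (T - Gᵀ * G).PosSemidef) {L : ℝ} (hL : 0 ≤ L)
    {d : Fin m → ℝ} {z : Fin n → ℝ} (hdz : ∀ i, |d i| ≤ L * |(W *ᵥ z) i|) :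
    ‖eu (G *ᵥ d)‖ ≤ L * √(specNorm (Wᵀ * T * W)) * ‖eu z‖ := by
  have hS : 0 ≤ specNorm (Wᵀ * T * W) := norm_nonneg _
  rw [← pow_le_pow_iff_left₀ (norm_nonneg _) (by positivity) two_ne_zero]
  calc ‖eu (G *ᵥ d)‖ ^ 2 = G *ᵥ d ⬝ᵥ G *ᵥ d := norm_eu_sq _
    _ ≤ d ⬝ᵥ T *ᵥ d := mulVec_dotProduct_mulVec_le_of_posSemidef_sub hGT d
    _ ≤ L ^ 2 * (W *ᵥ z ⬝ᵥ T *ᵥ (W *ᵥ z)) :=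
        dotProduct_mulVec_le_of_isDiag_of_abs_le hTdiag (fun _ => hTpsd.diag_nonneg) hdz
    _ = L ^ 2 * (z ⬝ᵥ (Wᵀ * T * W) *ᵥ z) := by rw [mulVec_dotProduct_mulVec_mulVec]
    _ ≤ L ^ 2 * (specNorm (Wᵀ * T * W) * ‖eu z‖ ^ 2) := by
        gcongr; exact dotProduct_mulVec_le_specNorm_mul_sq _ z
    _ = (L * √(specNorm (Wᵀ * T * W)) * ‖eu z‖) ^ 2 := by
        rw [mul_pow, mul_pow, Real.sq_sqrt hS]; ring

end SpectralNorm

/-- Refined loop-transformed Lipschitz bound: if `GᵀG ⪯ T` for a diagonal PSD `T`,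
then `h(x) = Hx + GΦ(Wx)` is Lipschitz with constant
`‖H + ((α+β)/2)GW‖ + ((β−α)/2)·‖WᵀTW‖^{1/2}` in the ℓ₂ norm. -/
theorem refined_loop_transform_bound {n m p : ℕ} (φ : ℝ → ℝ) (α β : ℝ) (hαβ : α ≤ β)
    (hslope : ∀ a b : ℝ, a ≠ b → α ≤ (φ a - φ b) / (a - b) ∧ (φ a - φ b) / (a - b) ≤ β)
    (H : Matrix (Fin p) (Fin n) ℝ) (G : Matrix (Fin p) (Fin m) ℝ)
    (W : Matrix (Fin m) (Fin n) ℝ) (T : Matrix (Fin m) (Fin m) ℝ)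
    (hTdiag : T.IsDiag) (hTpsd : T.PosSemidef)
    (hGT : (T - Gᵀ * G).PosSemidef) :
    ∀ x x' : EuclideanSpace ℝ (Fin n),
      ‖eu (H.mulVec x + G.mulVec (fun i => φ (W.mulVec x i))) -
        eu (H.mulVec x' + G.mulVec (fun i => φ (W.mulVec x' i)))‖ ≤
      (specNorm (H + ((α + β) / 2) • (G * W)) +
        (β - α) / 2 * Real.sqrt (specNorm (Wᵀ * T * W))) * ‖x - x'‖ := by
  intro x x'
  have hL : 0 ≤ (β - α) / 2 := by linarith
  have hcentred : ∀ i, |φ ((W *ᵥ x) i) - φ ((W *ᵥ x') i) - (α + β) / 2 * (W *ᵥ (x - x')) i| ≤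
      (β - α) / 2 * |(W *ᵥ (x - x')) i| := fun i => by
    rw [mulVec_sub]; exact abs_sub_sub_mul_sub_le_of_slope_mem hslope _ _
  calc _ = ‖eu ((H + ((α + β) / 2) • (G * W)) *ᵥ (x - x')) + eu (G *ᵥ fun i =>
          φ ((W *ᵥ x) i) - φ ((W *ᵥ x') i) - (α + β) / 2 * (W *ᵥ (x - x')) i)‖ :=
        congrArg (fun v => ‖eu v‖)
          (sub_eq_mulVec_add_mulVec_centred φ ((α + β) / 2) H G W x x')
    _ ≤ _ := norm_add_le _ _
    _ ≤ specNorm (H + ((α + β) / 2) • (G * W)) * ‖x - x'‖ +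
          (β - α) / 2 * √(specNorm (Wᵀ * T * W)) * ‖x - x'‖ :=
        add_le_add (norm_eu_mulVec_le _ _)
          (norm_eu_mulVec_le_of_abs_le hTdiag hTpsd hGT hL hcentred)
    _ = _ := by ring
end

section
/- Let φ be slope-restricted in [α, β] with 0 ≤ α ≤ β and applied entrywise, and consider the feedforward network f(x) = W_L Φ(W_{L−1} ⋯ Φ(W_0 x) ⋯). The LipLT constants m_k defined by m_0 = ‖W_0‖ and m_{k+1} = ‖W_{k+1}·((α+β)/2)^{k+1}·W_k⋯W_0‖ + ((β−α)/2)∑_{j=0}^{k}‖W_{k+1}((α+β)/2)^{k−j}W_k⋯W_{j+1}‖m_j satisfy m_k ≤ β^k·‖W_k‖⋯‖W_0‖ for all k, i.e., LipLT never exceeds the naive product bound. -/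
open Matrix
open scoped Matrix.Norms.L2Operator

/-- `prodDown M k c = M k * M (k-1) * ⋯ * M (k-c+1)` (a product of `c` factors). -/
def prodDown {n : ℕ} (M : ℕ → Matrix (Fin n) (Fin n) ℝ) :
    ℕ → ℕ → Matrix (Fin n) (Fin n) ℝ
  | _, 0 => 1
  | k, c + 1 => M k * prodDown M (k - 1) c

lemma specNorm_eq {p n : ℕ} (M : Matrix (Fin p) (Fin n) ℝ) : specNorm M = ‖M‖ := rfl

lemma specNorm_nonneg {p n : ℕ} (M : Matrix (Fin p) (Fin n) ℝ) : 0 ≤ specNorm M :=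
  norm_nonneg _

lemma specNorm_mul_le {n : ℕ} (A B : Matrix (Fin n) (Fin n) ℝ) :
    specNorm (A * B) ≤ specNorm A * specNorm B := by
  simp only [specNorm_eq]; exact Matrix.l2_opNorm_mul A B

lemma specNorm_smul {n : ℕ} (c : ℝ) (M : Matrix (Fin n) (Fin n) ℝ) :
    specNorm (c • M) = |c| * specNorm M := by
  simp only [specNorm_eq]; rw [norm_smul, Real.norm_eq_abs]

lemma pd_bound {n : ℕ} (W : ℕ → Matrix (Fin n) (Fin n) ℝ) :
    ∀ c k, specNorm (prodDown W (k + c) (c + 1)) ≤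
      ∏ i ∈ Finset.range (c + 1), specNorm (W (k + i)) := by
  intro c
  induction c with
  | zero => intro k; simp [prodDown, mul_one]
  | succ c ih =>
    intro k
    have h1 : k + (c + 1) = (k + c) + 1 := by omega
    have h2 : prodDown W (k + (c + 1)) (c + 2) = W (k + (c + 1)) * prodDown W (k + c) (c + 1) := by
      rw [h1]; simp [prodDown]
    rw [h2, Finset.prod_range_succ]
    calc specNorm (W (k + (c + 1)) * prodDown W (k + c) (c + 1))
        ≤ specNorm (W (k + (c + 1))) * specNorm (prodDown W (k + c) (c + 1)) :=
          specNorm_mul_le _ _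
      _ ≤ specNorm (W (k + (c + 1))) * ∏ i ∈ Finset.range (c + 1), specNorm (W (k + i)) :=
          mul_le_mul_of_nonneg_left (ih k) (specNorm_nonneg _)
      _ = (∏ i ∈ Finset.range (c + 1), specNorm (W (k + i))) * specNorm (W (k + (c + 1))) := by
          ring

/-- For feedforward networks (`H_k = 0`, `G_k = I`, so `Ĥ_k = ((α+β)/2)W_k`), the
LipLT constants `m_k` never exceed the naive product bound `β^k·∏‖W_i‖`. -/
theorem liplt_le_naive_feedforward {n : ℕ} (α β : ℝ) (hα : 0 ≤ α) (hαβ : α ≤ β)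
    (W : ℕ → Matrix (Fin n) (Fin n) ℝ) (m : ℕ → ℝ)
    (hm0 : m 0 = specNorm (W 0))
    (hm : ∀ k, m (k + 1) =
      specNorm (((α + β) / 2) ^ (k + 1) • prodDown W (k + 1) (k + 2)) +
      (β - α) / 2 * ∑ j ∈ Finset.range (k + 1),
        specNorm (((α + β) / 2) ^ (k - j) • prodDown W (k + 1) (k + 1 - j)) * m j) :
    ∀ k, m k ≤ β ^ k * ∏ i ∈ Finset.range (k + 1), specNorm (W i) := by
  set c : ℝ := (α + β) / 2 with hc_def
  have hc : 0 ≤ c := by rw [hc_def]; linarith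
  have hd : 0 ≤ (β - α) / 2 := by linarith
  have hβ : 0 ≤ β := le_trans hα hαβ
  intro k
  induction k using Nat.strong_induction_on with
  | _ k ih =>
    match k with
    | 0 => rw [hm0]; simp
    | k + 1 =>
      rw [hm k]
      set P : ℝ := ∏ i ∈ Finset.range (k + 2), specNorm (W i) with hP_def
      have hP : 0 ≤ P := Finset.prod_nonneg fun i _ => specNorm_nonneg _
      -- first term
      have hb1 : specNorm (c ^ (k + 1) • prodDown W (k + 1) (k + 2)) ≤ c ^ (k + 1) * P := by
        rw [specNorm_smul, abs_of_nonneg (pow_nonneg hc _)]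
        refine mul_le_mul_of_nonneg_left ?_ (pow_nonneg hc _)
        have := pd_bound W (k + 1) 0
        simpa using this
      -- summand bounds
      have hb2 : ∀ j ∈ Finset.range (k + 1),
          specNorm (c ^ (k - j) • prodDown W (k + 1) (k + 1 - j)) * m j
            ≤ c ^ (k - j) * β ^ j * P := by
        intro j hj
        have hjk : j ≤ k := Nat.lt_succ_iff.mp (Finset.mem_range.mp hj)
        have e1 : k + 1 = (j + 1) + (k - j) := by omega
        have e2 : k + 1 - j = (k - j) + 1 := by omega
        have hA : specNorm (prodDown W (k + 1) (k + 1 - j)) ≤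
            ∏ i ∈ Finset.range (k - j + 1), specNorm (W (j + 1 + i)) := by
          rw [e2, e1]; exact pd_bound W (k - j) (j + 1)
        have hmj : m j ≤ β ^ j * ∏ i ∈ Finset.range (j + 1), specNorm (W i) :=
          ih j (by omega)
        have hmjn : 0 ≤ β ^ j * ∏ i ∈ Finset.range (j + 1), specNorm (W i) := by
          exact mul_nonneg (pow_nonneg hβ _)
            (Finset.prod_nonneg fun i _ => specNorm_nonneg _)
        calc specNorm (c ^ (k - j) • prodDown W (k + 1) (k + 1 - j)) * m j
            ≤ specNorm (c ^ (k - j) • prodDown W (k + 1) (k + 1 - j)) *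
                (β ^ j * ∏ i ∈ Finset.range (j + 1), specNorm (W i)) :=
              mul_le_mul_of_nonneg_left hmj (specNorm_nonneg _)
          _ ≤ (c ^ (k - j) * ∏ i ∈ Finset.range (k - j + 1), specNorm (W (j + 1 + i))) *
                (β ^ j * ∏ i ∈ Finset.range (j + 1), specNorm (W i)) := by
              refine mul_le_mul_of_nonneg_right ?_ hmjn
              rw [specNorm_smul, abs_of_nonneg (pow_nonneg hc _)]
              exact mul_le_mul_of_nonneg_left hA (pow_nonneg hc _)
          _ = c ^ (k - j) * β ^ j * P := by
              have hsplit : P = (∏ i ∈ Finset.range (j + 1), specNorm (W i)) *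
                  ∏ i ∈ Finset.range (k - j + 1), specNorm (W (j + 1 + i)) := by
                rw [hP_def, show k + 2 = (j + 1) + (k - j + 1) from by omega]
                exact Finset.prod_range_add _ _ _
              rw [hsplit]; ring
      have hsum : (∑ j ∈ Finset.range (k + 1),
          specNorm (c ^ (k - j) • prodDown W (k + 1) (k + 1 - j)) * m j)
            ≤ ∑ j ∈ Finset.range (k + 1), c ^ (k - j) * β ^ j * P :=
        Finset.sum_le_sum hb2
      have key : c ^ (k + 1) + (β - α) / 2 * ∑ j ∈ Finset.range (k + 1),
          c ^ (k - j) * β ^ j = β ^ (k + 1) := by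
        have hgeom := geom_sum₂_mul β c (k + 1)
        have hrw : (∑ i ∈ Finset.range (k + 1), β ^ i * c ^ (k + 1 - 1 - i)) =
            ∑ j ∈ Finset.range (k + 1), c ^ (k - j) * β ^ j := by
          refine Finset.sum_congr rfl fun i hi => ?_
          have : k + 1 - 1 - i = k - i := by omega
          rw [this]; ring
        rw [hrw] at hgeom
        have hd2 : (β - α) / 2 = β - c := by rw [hc_def]; ring
        rw [hd2]
        nlinarith [hgeom]
      calc specNorm (c ^ (k + 1) • prodDown W (k + 1) (k + 2)) +
            (β - α) / 2 * ∑ j ∈ Finset.range (k + 1),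
              specNorm (c ^ (k - j) • prodDown W (k + 1) (k + 1 - j)) * m j
          ≤ c ^ (k + 1) * P + (β - α) / 2 * ∑ j ∈ Finset.range (k + 1),
              c ^ (k - j) * β ^ j * P :=
            add_le_add hb1 (mul_le_mul_of_nonneg_left hsum hd)
        _ = (c ^ (k + 1) + (β - α) / 2 * ∑ j ∈ Finset.range (k + 1),
              c ^ (k - j) * β ^ j) * P := by rw [← Finset.sum_mul]; ring
        _ = β ^ (k + 1) * P := by rw [key]
end
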